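/- There exist perfect matchings M₁ ⊆ 𝒜₁ and M₂ ⊆ 𝒜₂ with M₁ ∩ M₂ = ∅ if and only if the constructed 2-matching instance admits a valid assignment f with w(f) ≤ t. -/

import Mathlib

/-!
Given an assignment `f`, the pairs sent to `{p^i_r, q^i_s}` form a partial matching `Mᵢ ⊆ 𝒜ᵢ`
(two pairs sharing `p_r` or `q_s` would receive intersecting sets), and `M₁ ∩ M₂ = ∅`. Every
other pair pays one extra unit for `{z_{rs}, z'_{rs}}`, so `w(f) = |𝒜₁| + |𝒜₂| - |M₁| - |M₂|`.
Since `|Mᵢ| ≤ n`, the bound `w(f) ≤ t` forces `|M₁| = |M₂| = n`, i.e. both matchings are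
perfect; conversely two disjoint perfect matchings define an assignment of weight exactly `t`.
-/

/-- The ground set `B` of the constructed 2-matching instance: elements `p^i_r`
(left summand), `q^i_s` (middle summand), and `z_{rs}, z'_{rs}` (right summand,
indexed by a pair and a tag in `Fin 2`). -/
abbrev DMB (n : ℕ) := (Fin 2 × Fin n) ⊕ ((Fin 2 × Fin n) ⊕ ((Fin n × Fin n) × Fin 2))

/-- The candidate set `{p^i_r, q^i_s}` for the pair `a = (r, s)`. -/
def pqSet {n : ℕ} (i : Fin 2) (a : Fin n × Fin n) : Finset (DMB n) :=
  {Sum.inl (i, a.1), Sum.inr (Sum.inl (i, a.2))}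

/-- The candidate set `{z_{rs}, z'_{rs}}` for the pair `a = (r, s)`. -/
def zSet {n : ℕ} (a : Fin n × Fin n) : Finset (DMB n) :=
  {Sum.inr (Sum.inr (a, 0)), Sum.inr (Sum.inr (a, 1))}

/-- The candidate sets `P_{(r,s)}` of the constructed 2-matching instance. -/
def Pdm {n : ℕ} (A1 A2 : Finset (Fin n × Fin n)) (a : Fin n × Fin n) :
    Finset (Finset (DMB n)) :=
  (if a ∈ A1 then {pqSet 0 a} else ∅) ∪ (if a ∈ A2 then {pqSet 1 a} else ∅) ∪ {zSet a}

/-- The weights of the constructed 2-matching instance: `0` on `{p^i_r, q^i_s}` and `1`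
on `{z_{rs}, z'_{rs}}` when `(p_r,q_s) ∈ 𝒜₁ △ 𝒜₂`; `1` and `2` respectively when
`(p_r,q_s) ∈ 𝒜₁ ∩ 𝒜₂`. -/
def wdm {n : ℕ} (A1 A2 : Finset (Fin n × Fin n)) (a : Fin n × Fin n)
    (j : Finset (DMB n)) : ℝ :=
  (if j = zSet a then 1 else 0) + (if a ∈ A1 ∧ a ∈ A2 then 1 else 0)

/-- A perfect matching: `n` pairs such that every `p_r` and every `q_s` occurs in
exactly one pair. -/
def IsPM {n : ℕ} (M : Finset (Fin n × Fin n)) : Prop :=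
  M.card = n ∧ (∀ r : Fin n, ∃! s : Fin n, (r, s) ∈ M) ∧
    (∀ s : Fin n, ∃! r : Fin n, (r, s) ∈ M)

open Finset

variable {n : ℕ}

section PerfectMatching

lemma IsPM.injOn_fst {M : Finset (Fin n × Fin n)} (hM : IsPM M) :
    Set.InjOn Prod.fst (M : Set (Fin n × Fin n)) := by
  rintro ⟨r, s⟩ ha ⟨r', s'⟩ hb (rfl : r = r')
  obtain ⟨t, -, ht⟩ := hM.2.1 r
  rw [ht s ha, ht s' hb]

lemma IsPM.injOn_snd {M : Finset (Fin n × Fin n)} (hM : IsPM M) :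
    Set.InjOn Prod.snd (M : Set (Fin n × Fin n)) := by
  rintro ⟨r, s⟩ ha ⟨r', s'⟩ hb (rfl : s = s')
  obtain ⟨t, -, ht⟩ := hM.2.2 s
  rw [ht r ha, ht r' hb]

lemma isPM_of_card_eq {M : Finset (Fin n × Fin n)} (hcard : #M = n)
    (hfst : Set.InjOn Prod.fst (M : Set (Fin n × Fin n)))
    (hsnd : Set.InjOn Prod.snd (M : Set (Fin n × Fin n))) : IsPM M := by
  have surj (g : Fin n × Fin n → Fin n) (hg : Set.InjOn g M) :
      Set.SurjOn g M (univ : Finset (Fin n)) :=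
    surjOn_of_injOn_of_card_le g (fun _ _ => mem_univ _) hg (by simp [hcard])
  refine ⟨hcard, fun r => ?_, fun s => ?_⟩
  · obtain ⟨⟨r, s⟩, hm, rfl⟩ := surj Prod.fst hfst (mem_univ r)
    exact ⟨s, hm, fun s' hs' => congrArg Prod.snd (hfst hs' hm rfl)⟩
  · obtain ⟨⟨r, s⟩, hm, rfl⟩ := surj Prod.snd hsnd (mem_univ s)
    exact ⟨r, hm, fun r' hr' => congrArg Prod.fst (hsnd hr' hm rfl)⟩

end PerfectMatching

section Gadget

variable {i j : Fin 2} {a b : Fin n × Fin n}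

lemma pqSet_inter_pqSet_eq_empty_iff :
    pqSet i a ∩ pqSet j b = ∅ ↔ i ≠ j ∨ a.1 ≠ b.1 ∧ a.2 ≠ b.2 := by
  simp [pqSet, Finset.ext_iff]
  tauto

lemma pqSet_inter_zSet : pqSet i a ∩ zSet b = ∅ := by
  simp [pqSet, zSet]

lemma zSet_inter_pqSet : zSet a ∩ pqSet i b = ∅ := by
  simp [pqSet, zSet]

lemma zSet_inter_zSet_eq_empty_iff : zSet a ∩ zSet b = ∅ ↔ a ≠ b := by
  simp [zSet, Finset.ext_iff]

lemma pqSet_ne_zSet : pqSet i a ≠ zSet b := by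
  simp [pqSet, zSet, Finset.ext_iff]

lemma pqSet_ne_pqSet (h : i ≠ j) : pqSet i a ≠ pqSet j b := by
  simp [pqSet, Finset.ext_iff, h]

lemma mem_Pdm {A1 A2 : Finset (Fin n × Fin n)} {J : Finset (DMB n)} :
    J ∈ Pdm A1 A2 a ↔ (a ∈ A1 ∧ J = pqSet 0 a) ∨ (a ∈ A2 ∧ J = pqSet 1 a) ∨ J = zSet a := by
  simp only [Pdm, mem_union]
  split_ifs <;> simp_all [or_assoc]

end Gadget

section Assignment

variable {A1 A2 U : Finset (Fin n × Fin n)} {f : Fin n × Fin n → Finset (DMB n)}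

def assignedMatching (U : Finset (Fin n × Fin n)) (f : Fin n × Fin n → Finset (DMB n))
    (i : Fin 2) : Finset (Fin n × Fin n) :=
  U.filter fun a => f a = pqSet i a

lemma sum_wdm_eq (hf : ∀ a ∈ A1 ∪ A2, f a ∈ Pdm A1 A2 a) :
    ∑ a ∈ A1 ∪ A2, wdm A1 A2 a (f a) = (#A1 + #A2 : ℝ)
      - #(assignedMatching (A1 ∪ A2) f 0) - #(assignedMatching (A1 ∪ A2) f 1) := by
  -- exactly one of the three candidate sets of `a` is chosen
  have hw : ∀ a ∈ A1 ∪ A2, wdm A1 A2 a (f a) = 1 - (if f a = pqSet 0 a then 1 else 0)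
      - (if f a = pqSet 1 a then 1 else 0) + (if a ∈ A1 ∧ a ∈ A2 then 1 else 0) := by
    intro a ha
    rcases mem_Pdm.1 (hf a ha) with ⟨-, h⟩ | ⟨-, h⟩ | h <;>
      simp [wdm, h, pqSet_ne_zSet, pqSet_ne_zSet.symm, pqSet_ne_pqSet]
  have hinter : (A1 ∪ A2).filter (fun a => a ∈ A1 ∧ a ∈ A2) = A1 ∩ A2 := by
    ext a; simp +contextual
  rw [sum_congr rfl hw]
  simp only [sum_add_distrib, sum_sub_distrib, sum_boole, sum_const, hinter, assignedMatching]
  have hcard : (#(A1 ∪ A2) + #(A1 ∩ A2) : ℝ) = #A1 + #A2 := by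
    exact_mod_cast card_union_add_card_inter A1 A2
  simp only [nsmul_eq_mul, mul_one]
  linarith

lemma assignedMatching_zero_subset (hf : ∀ a ∈ A1 ∪ A2, f a ∈ Pdm A1 A2 a) :
    assignedMatching (A1 ∪ A2) f 0 ⊆ A1 := by
  intro a ha
  obtain ⟨haU, hfa⟩ := mem_filter.1 ha
  rcases mem_Pdm.1 (hf a haU) with ⟨h, -⟩ | ⟨-, h⟩ | h
  · exact h
  · exact absurd (hfa.symm.trans h) (pqSet_ne_pqSet (by decide))
  · exact absurd (hfa.symm.trans h) pqSet_ne_zSet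

lemma assignedMatching_one_subset (hf : ∀ a ∈ A1 ∪ A2, f a ∈ Pdm A1 A2 a) :
    assignedMatching (A1 ∪ A2) f 1 ⊆ A2 := by
  intro a ha
  obtain ⟨haU, hfa⟩ := mem_filter.1 ha
  rcases mem_Pdm.1 (hf a haU) with ⟨-, h⟩ | ⟨h, -⟩ | h
  · exact absurd (hfa.symm.trans h) (pqSet_ne_pqSet (by decide))
  · exact h
  · exact absurd (hfa.symm.trans h) pqSet_ne_zSet

lemma assignedMatching_zero_inter_one : assignedMatching U f 0 ∩ assignedMatching U f 1 = ∅ := by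
  ext a
  simp only [assignedMatching, mem_inter, mem_filter, notMem_empty, iff_false]
  rintro ⟨⟨-, h0⟩, -, h1⟩
  exact pqSet_ne_pqSet (by decide) (h0.symm.trans h1)

lemma eq_of_mem_assignedMatching (hdis : ∀ a₁ ∈ U, ∀ a₂ ∈ U, a₁ ≠ a₂ → f a₁ ∩ f a₂ = ∅)
    {i : Fin 2} {a b : Fin n × Fin n}
    (ha : a ∈ assignedMatching U f i) (hb : b ∈ assignedMatching U f i)
    (hab : a.1 = b.1 ∨ a.2 = b.2) : a = b := by
  obtain ⟨haU, hfa⟩ := mem_filter.1 ha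
  obtain ⟨hbU, hfb⟩ := mem_filter.1 hb
  by_contra hne
  have := hdis a haU b hbU hne
  rw [hfa, hfb, pqSet_inter_pqSet_eq_empty_iff] at this
  tauto

lemma card_assignedMatching_le (hdis : ∀ a₁ ∈ U, ∀ a₂ ∈ U, a₁ ≠ a₂ → f a₁ ∩ f a₂ = ∅)
    (i : Fin 2) : #(assignedMatching U f i) ≤ n := by
  simpa using card_le_card_of_injOn Prod.fst (t := univ) (fun _ _ => mem_univ _)
    fun a ha b hb h => eq_of_mem_assignedMatching hdis ha hb (.inl h)

lemma isPM_assignedMatching (hdis : ∀ a₁ ∈ U, ∀ a₂ ∈ U, a₁ ≠ a₂ → f a₁ ∩ f a₂ = ∅)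
    {i : Fin 2} (hcard : #(assignedMatching U f i) = n) : IsPM (assignedMatching U f i) :=
  isPM_of_card_eq hcard (fun _ ha _ hb h => eq_of_mem_assignedMatching hdis ha hb (.inl h))
    fun _ ha _ hb h => eq_of_mem_assignedMatching hdis ha hb (.inr h)

end Assignment

section MatchingAssignment

variable {M1 M2 : Finset (Fin n × Fin n)}

def matchingAssignment (M1 M2 : Finset (Fin n × Fin n)) (a : Fin n × Fin n) : Finset (DMB n) :=
  if a ∈ M1 then pqSet 0 a else if a ∈ M2 then pqSet 1 a else zSet a

lemma matchingAssignment_mem_Pdm {A1 A2 : Finset (Fin n × Fin n)} (h1 : M1 ⊆ A1) (h2 : M2 ⊆ A2)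
    (a : Fin n × Fin n) : matchingAssignment M1 M2 a ∈ Pdm A1 A2 a := by
  unfold matchingAssignment
  split_ifs with ha1 ha2
  · simp [mem_Pdm, h1 ha1]
  · simp [mem_Pdm, h2 ha2]
  · simp [mem_Pdm]

lemma matchingAssignment_inter_eq_empty (hM1 : IsPM M1) (hM2 : IsPM M2) {a b : Fin n × Fin n}
    (hab : a ≠ b) : matchingAssignment M1 M2 a ∩ matchingAssignment M1 M2 b = ∅ := by
  have hsep {M : Finset (Fin n × Fin n)} (hM : IsPM M) (ha : a ∈ M) (hb : b ∈ M) :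
      a.1 ≠ b.1 ∧ a.2 ≠ b.2 :=
    ⟨hM.injOn_fst.ne ha hb hab, hM.injOn_snd.ne ha hb hab⟩
  unfold matchingAssignment
  split_ifs with ha1 hb1 hb2 ha2 hb1 hb2 hb1 hb2 <;>
    simp only [pqSet_inter_pqSet_eq_empty_iff, pqSet_inter_zSet, zSet_inter_pqSet,
      zSet_inter_zSet_eq_empty_iff]
  all_goals first
    | exact hab
    | exact .inl (by decide)
    | exact .inr (hsep hM1 ‹_› ‹_›)
    | exact .inr (hsep hM2 ‹_› ‹_›)

lemma assignedMatching_matchingAssignment_zero {U : Finset (Fin n × Fin n)} (h1 : M1 ⊆ U) :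
    assignedMatching U (matchingAssignment M1 M2) 0 = M1 := by
  ext a
  rw [assignedMatching, mem_filter, matchingAssignment]
  by_cases ha1 : a ∈ M1
  · simp [ha1, h1 ha1]
  · split_ifs <;> simp [ha1, pqSet_ne_pqSet, pqSet_ne_zSet.symm]

lemma assignedMatching_matchingAssignment_one {U : Finset (Fin n × Fin n)} (h2 : M2 ⊆ U)
    (hdisj : M1 ∩ M2 = ∅) : assignedMatching U (matchingAssignment M1 M2) 1 = M2 := by
  ext a
  rw [assignedMatching, mem_filter, matchingAssignment]
  by_cases ha2 : a ∈ M2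
  · have ha1 : a ∉ M1 := fun ha1 => by simpa [hdisj] using mem_inter.2 ⟨ha1, ha2⟩
    simp [ha1, ha2, h2 ha2]
  · split_ifs <;> simp [ha2, pqSet_ne_pqSet, pqSet_ne_zSet.symm]

end MatchingAssignment

theorem stmt_9_general {n : ℕ}
    (A1 A2 : Finset (Fin n × Fin n)) :
    (∃ M1 M2 : Finset (Fin n × Fin n),
        M1 ⊆ A1 ∧ M2 ⊆ A2 ∧ IsPM M1 ∧ IsPM M2 ∧ M1 ∩ M2 = ∅) ↔
    (∃ f : Fin n × Fin n → Finset (DMB n),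
        (∀ a ∈ A1 ∪ A2, f a ∈ Pdm A1 A2 a) ∧
        (∀ a₁ ∈ A1 ∪ A2, ∀ a₂ ∈ A1 ∪ A2, a₁ ≠ a₂ → f a₁ ∩ f a₂ = ∅) ∧
        ∑ a ∈ A1 ∪ A2, wdm A1 A2 a (f a) ≤ (A1.card : ℝ) + (A2.card : ℝ) - 2 * n) := by
  constructor
  · rintro ⟨M1, M2, hM1A, hM2A, hM1, hM2, hdisj⟩
    have hf a (_ : a ∈ A1 ∪ A2) := matchingAssignment_mem_Pdm hM1A hM2A a
    refine ⟨matchingAssignment M1 M2, hf,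
      fun a _ b _ hab => matchingAssignment_inter_eq_empty hM1 hM2 hab, ?_⟩
    rw [sum_wdm_eq hf, assignedMatching_matchingAssignment_zero (hM1A.trans subset_union_left),
      assignedMatching_matchingAssignment_one (hM2A.trans subset_union_right) hdisj, hM1.1, hM2.1]
    linarith
  · rintro ⟨f, hf, hdis, hw⟩
    set M1 := assignedMatching (A1 ∪ A2) f 0
    set M2 := assignedMatching (A1 ∪ A2) f 1
    have hM1 : #M1 ≤ n := card_assignedMatching_le hdis 0
    have hM2 : #M2 ≤ n := card_assignedMatching_le hdis 1
    have hsum : (2 * n : ℝ) ≤ #M1 + #M2 := by linarith [sum_wdm_eq hf]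
    have hsum : 2 * n ≤ #M1 + #M2 := by exact_mod_cast hsum
    exact ⟨M1, M2, assignedMatching_zero_subset hf, assignedMatching_one_subset hf,
      isPM_assignedMatching hdis (show #M1 = n by omega),
      isPM_assignedMatching hdis (show #M2 = n by omega),
      assignedMatching_zero_inter_one⟩

/-- there exist disjoint perfect matchings `M₁ ⊆ 𝒜₁`, `M₂ ⊆ 𝒜₂` iff the
constructed 2-matching instance admits a valid assignment of weight at most
`t = |𝒜₁| + |𝒜₂| − 2n`. -/
theorem stmt_9 {n : ℕ} (hn : 0 < n)
    (A1 A2 : Finset (Fin n × Fin n)) :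
    (∃ M1 M2 : Finset (Fin n × Fin n),
        M1 ⊆ A1 ∧ M2 ⊆ A2 ∧ IsPM M1 ∧ IsPM M2 ∧ M1 ∩ M2 = ∅) ↔
    (∃ f : Fin n × Fin n → Finset (DMB n),
        (∀ a ∈ A1 ∪ A2, f a ∈ Pdm A1 A2 a) ∧
        (∀ a₁ ∈ A1 ∪ A2, ∀ a₂ ∈ A1 ∪ A2, a₁ ≠ a₂ → f a₁ ∩ f a₂ = ∅) ∧
        ∑ a ∈ A1 ∪ A2, wdm A1 A2 a (f a) ≤ (A1.card : ℝ) + (A2.card : ℝ) - 2 * n) :=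
  stmt_9_general A1 A2
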